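/- There exists an optimal solution of the 1-center 1-freeway problem in which the facility point lies on the freeway segment: for any finite S ⊆ ℝ², v > 1, and ℓ > 0, the infimum of max_{p∈S} d_h(p,f) over all facilities f and segments h of length ℓ is attained by some pair (f,h) with f ∈ h. -/

import Mathlib

noncomputable def n1 (p : ℝ × ℝ) : ℝ := |p.1| + |p.2|
noncomputable def n2 (p : ℝ × ℝ) : ℝ := Real.sqrt (p.1 ^ 2 + p.2 ^ 2)

noncomputable def dfree (a b : ℝ × ℝ) (v : ℝ) (p f : ℝ × ℝ) : ℝ :=
  min (n1 (p - f))
    (sInf {c : ℝ | ∃ q₁ ∈ segment ℝ a b, ∃ q₂ ∈ segment ℝ a b,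
      c = n1 (p - q₁) + n2 (q₁ - q₂) / v + n1 (q₂ - f)})

/-!
Translate the freeway so that its point `q` nearest to `f` in `n1` lands on `f`; this never
increases a freeway distance to `f`. A path entering at `q₁` and leaving at `q₂` becomes one
entering at a point `z` of the translated freeway and riding to `f`. The point `z` can be chosen
so that the ride is no longer than the ride from `q₁` to `q₂`, and so that the walk from `q₁` to
`z` is a translate of the walk from some point between `q` and `q₂` to `f`. By convexity of
`n1`, that walk is no longer than the walk from `q₂` to `f`.

So it suffices to minimise over configurations with `f` on the freeway. Because
`d_h(p, f) ≥ dist p f / v`, the configurations worth considering keep `f` in a fixed ball.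
They therefore form a compact family, and the objective is continuous on it.
-/

open Set AffineMap

lemma n1_add_le (x y : ℝ × ℝ) : n1 (x + y) ≤ n1 x + n1 y := by
  simp only [n1, Prod.fst_add, Prod.snd_add]
  linarith [abs_add_le x.1 y.1, abs_add_le x.2 y.2]

lemma n1_sub_le (x y z : ℝ × ℝ) : n1 (x - z) ≤ n1 (x - y) + n1 (y - z) := by
  simpa using n1_add_le (x - y) (y - z)

lemma n1_smul (c : ℝ) (x : ℝ × ℝ) : n1 (c • x) = |c| * n1 x := by
  simp [n1, abs_mul, mul_add]

lemma convexOn_n1 : ConvexOn ℝ univ n1 :=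
  ⟨convex_univ, fun x _ y _ a b ha hb _ => by
    simpa [n1_smul, abs_of_nonneg ha, abs_of_nonneg hb] using n1_add_le (a • x) (b • y)⟩

lemma n2_smul (c : ℝ) (x : ℝ × ℝ) : n2 (c • x) = |c| * n2 x := by
  simp only [n2, Prod.smul_fst, Prod.smul_snd, smul_eq_mul, mul_pow, ← mul_add]
  rw [Real.sqrt_mul (sq_nonneg c), Real.sqrt_sq_eq_abs]

lemma n2_sub_comm (x y : ℝ × ℝ) : n2 (x - y) = n2 (y - x) := by
  rw [← neg_sub y x]
  simp only [n2, Prod.fst_neg, Prod.snd_neg, neg_sq]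

lemma n2_le_n1 (x : ℝ × ℝ) : n2 x ≤ n1 x := by
  unfold n1 n2
  refine Real.sqrt_le_iff.2 ⟨by positivity, ?_⟩
  nlinarith [sq_abs x.1, sq_abs x.2, mul_nonneg (abs_nonneg x.1) (abs_nonneg x.2)]

lemma norm_le_n2 (x : ℝ × ℝ) : ‖x‖ ≤ n2 x := by
  refine max_le ?_ ?_ <;> refine Real.abs_le_sqrt ?_ <;> nlinarith [sq_nonneg x.1, sq_nonneg x.2]

@[fun_prop]
lemma continuous_n1 : Continuous n1 := by
  unfold n1; fun_prop

@[fun_prop]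
lemma continuous_n2 : Continuous n2 := by
  unfold n2; fun_prop

lemma isCompact_setOf_n2_eq (ℓ : ℝ) : IsCompact {u : ℝ × ℝ | n2 u = ℓ} :=
  (isCompact_closedBall 0 ℓ).of_isClosed_subset (isClosed_eq continuous_n2 continuous_const)
    fun u hu => by simpa [← show n2 u = ℓ from hu] using norm_le_n2 u

section dfree

variable {a b q₁ q₂ : ℝ × ℝ} {v : ℝ} (p f : ℝ × ℝ)

lemma dfree_le_n1 : dfree a b v p f ≤ n1 (p - f) := min_le_left _ _

lemma dfree_le_of_mem_segment (hv : 0 ≤ v) (h₁ : q₁ ∈ segment ℝ a b) (h₂ : q₂ ∈ segment ℝ a b) :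
    dfree a b v p f ≤ n1 (p - q₁) + n2 (q₁ - q₂) / v + n1 (q₂ - f) := by
  refine (min_le_right _ _).trans (csInf_le ⟨0, ?_⟩ ⟨q₁, h₁, q₂, h₂, rfl⟩)
  rintro _ ⟨q₁, -, q₂, -, rfl⟩
  unfold n1 n2
  positivity

lemma le_dfree {c : ℝ} (h₀ : c ≤ n1 (p - f))
    (h : ∀ q₁ ∈ segment ℝ a b, ∀ q₂ ∈ segment ℝ a b,
      c ≤ n1 (p - q₁) + n2 (q₁ - q₂) / v + n1 (q₂ - f)) :
    c ≤ dfree a b v p f := by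
  refine le_min h₀ (le_csInf ⟨_, a, left_mem_segment ℝ a b, a, left_mem_segment ℝ a b, rfl⟩ ?_)
  rintro _ ⟨q₁, h₁, q₂, h₂, rfl⟩
  exact h q₁ h₁ q₂ h₂

lemma dist_div_le_dfree (hv : 1 ≤ v) : dist p f / v ≤ dfree a b v p f := by
  have hv₀ : 0 < v := by linarith
  have hn1 : ∀ x y : ℝ × ℝ, dist x y / v ≤ n1 (x - y) := fun x y =>
    (div_le_self dist_nonneg hv).trans (dist_eq_norm x y ▸ (norm_le_n2 _).trans (n2_le_n1 _))
  refine le_dfree p f (hn1 p f) fun q₁ _ q₂ _ => ?_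
  have hn2 : dist q₁ q₂ / v ≤ n2 (q₁ - q₂) / v := by
    gcongr
    exact dist_eq_norm q₁ q₂ ▸ norm_le_n2 _
  calc dist p f / v ≤ dist p q₁ / v + dist q₁ q₂ / v + dist q₂ f / v := by
        rw [← add_div, ← add_div]
        gcongr
        exact dist_triangle4 p q₁ q₂ f
    _ ≤ _ := by linarith [hn1 p q₁, hn1 q₂ f]

end dfree

lemma dfree_eq_min_sInf_image (a b : ℝ × ℝ) (v : ℝ) (p f : ℝ × ℝ) :
    dfree a b v p f = min (n1 (p - f)) (sInf ((fun σ : ℝ × ℝ =>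
      n1 (p - lineMap a b σ.1) + n2 (lineMap a b σ.1 - lineMap a b σ.2) / v +
        n1 (lineMap a b σ.2 - f)) '' Icc (0 : ℝ) 1 ×ˢ Icc (0 : ℝ) 1)) := by
  unfold dfree
  congr 2
  ext c
  simp only [segment_eq_image_lineMap, mem_ofPred_eq, mem_image]
  constructor
  · rintro ⟨_, ⟨s, hs, rfl⟩, _, ⟨t, ht, rfl⟩, rfl⟩
    exact ⟨(s, t), mk_mem_prod hs ht, rfl⟩
  · rintro ⟨⟨s, t⟩, ⟨hs, ht⟩, rfl⟩
    exact ⟨_, ⟨s, hs, rfl⟩, _, ⟨t, ht, rfl⟩, rfl⟩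

lemma continuous_dfree (v : ℝ) (p : ℝ × ℝ) :
    Continuous fun x : (ℝ × ℝ) × (ℝ × ℝ) × (ℝ × ℝ) => dfree x.1 x.2.1 v p x.2.2 := by
  simp_rw [dfree_eq_min_sInf_image]
  refine Continuous.min (by fun_prop) ((isCompact_Icc.prod isCompact_Icc).continuous_sInf ?_)
  simp only [lineMap_apply_module']
  fun_prop

lemma exists_mem_uIcc_abs_sub_le {σ₀ σ₁ : ℝ} (σ₂ : ℝ) (h₀ : σ₀ ∈ Icc (0 : ℝ) 1)
    (h₁ : σ₁ ∈ Icc (0 : ℝ) 1) :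
    ∃ θ ∈ uIcc σ₀ σ₂, σ₀ + σ₁ - θ ∈ Icc (0 : ℝ) 1 ∧ |σ₁ - θ| ≤ |σ₁ - σ₂| := by
  obtain ⟨h₀, h₀'⟩ := h₀
  obtain ⟨h₁, h₁'⟩ := h₁
  rcases lt_or_ge (σ₀ + σ₁ - σ₂) 0 with h | h
  · refine ⟨σ₀ + σ₁, Icc_subset_uIcc ⟨by linarith, by linarith⟩, by simp, ?_⟩
    exact (abs_le.2 ⟨by linarith, by linarith⟩).trans (neg_le_abs _)
  rcases le_or_gt (σ₀ + σ₁ - σ₂) 1 with h' | h'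
  · exact ⟨σ₂, right_mem_uIcc, ⟨h, h'⟩, le_rfl⟩
  · refine ⟨σ₀ + σ₁ - 1, Icc_subset_uIcc' ⟨by linarith, by linarith⟩, by simp, ?_⟩
    exact (abs_le.2 ⟨by linarith, by linarith⟩).trans (le_abs_self _)

lemma add_smul_mem_segment {E : Type*} [AddCommGroup E] [Module ℝ E] {s t : ℝ} (f u : E)
    (h : s + t ∈ Icc (0 : ℝ) 1) : f + t • u ∈ segment ℝ (f - s • u) (f + (1 - s) • u) := by
  rw [segment_eq_image_lineMap]
  exact ⟨s + t, h, by rw [lineMap_apply_module']; module⟩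

lemma mem_segment_sub_smul_add_smul {E : Type*} [AddCommGroup E] [Module ℝ E] {s : ℝ} (f u : E)
    (hs : s ∈ Icc (0 : ℝ) 1) : f ∈ segment ℝ (f - s • u) (f + (1 - s) • u) := by
  simpa using add_smul_mem_segment (t := 0) f u (by simpa using hs)

theorem exists_dfree_shift_le (a b f : ℝ × ℝ) {v : ℝ} (hv : 0 ≤ v) :
    ∃ s ∈ Icc (0 : ℝ) 1, ∀ p,
      dfree (f - s • (b - a)) (f + (1 - s) • (b - a)) v p f ≤ dfree a b v p f := by
  set L : ℝ →ᵃ[ℝ] ℝ × ℝ := lineMap a b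
  have hconv : ConvexOn ℝ univ fun θ => n1 (L θ - f) := by
    have : (fun θ => n1 (L θ - f)) = n1 ∘ lineMap (a - f) (b - f) := by
      ext θ; simp only [L, Function.comp, lineMap_apply_module']; congr 1; module
    exact this ▸ convexOn_n1.comp_affineMap _
  obtain ⟨σ₀, hσ₀, hmin⟩ := isCompact_Icc.exists_isMinOn (nonempty_Icc.2 zero_le_one)
    (hconv.continuousOn isOpen_univ |>.mono (subset_univ _))
  refine ⟨σ₀, hσ₀, fun p => le_dfree p f (dfree_le_n1 p f) fun q₁ hq₁ q₂ hq₂ => ?_⟩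
  rw [segment_eq_image_lineMap] at hq₁ hq₂
  obtain ⟨σ₁, hσ₁, rfl⟩ := hq₁
  obtain ⟨σ₂, hσ₂, rfl⟩ := hq₂
  obtain ⟨θ, hθ, hτ, hθσ⟩ := exists_mem_uIcc_abs_sub_le σ₂ hσ₀ hσ₁
  set z := f + (σ₁ - θ) • (b - a)
  have hz : z ∈ segment ℝ (f - σ₀ • (b - a)) (f + (1 - σ₀) • (b - a)) :=
    add_smul_mem_segment f _ (by convert hτ using 1; ring)
  have hwalk : n1 (L σ₁ - z) ≤ n1 (L σ₂ - f) := by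
    have : L σ₁ - z = L θ - f := by simp only [L, z, lineMap_apply_module']; module
    rw [this]
    refine (hconv.le_on_segment (mem_univ _) (mem_univ _) (segment_eq_uIcc σ₀ σ₂ ▸ hθ)).trans ?_
    exact max_le (hmin hσ₂) le_rfl
  have hride : n2 (z - f) ≤ n2 (L σ₁ - L σ₂) := by
    have h₁ : z - f = (σ₁ - θ) • (b - a) := by simp only [z]; module
    have h₂ : L σ₁ - L σ₂ = (σ₁ - σ₂) • (b - a) := by simp only [L, lineMap_apply_module']; module
    rw [h₁, h₂, n2_smul, n2_smul]
    exact mul_le_mul_of_nonneg_right hθσ (Real.sqrt_nonneg _)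
  calc dfree _ _ v p f ≤ n1 (p - z) + n2 (z - f) / v + n1 (f - f) :=
        dfree_le_of_mem_segment p f hv hz (mem_segment_sub_smul_add_smul f _ hσ₀)
    _ ≤ n1 (p - L σ₁) + n2 (L σ₁ - L σ₂) / v + n1 (L σ₂ - f) := by
        have hff : n1 (f - f) = 0 := by simp [n1]
        have : n2 (z - f) / v ≤ n2 (L σ₁ - L σ₂) / v := by gcongr
        linarith [n1_sub_le p (L σ₁) z]

theorem stmt12 (S : Finset (ℝ × ℝ)) (hS : S.Nonempty) (v ℓ : ℝ) (hv : 1 < v)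
    (hℓ : 0 < ℓ) :
    ∃ a b f : ℝ × ℝ, n2 (a - b) = ℓ ∧ f ∈ segment ℝ a b ∧
      ∀ a' b' f' : ℝ × ℝ, n2 (a' - b') = ℓ →
        S.sup' hS (fun p => dfree a b v p f) ≤
          S.sup' hS (fun p => dfree a' b' v p f') := by
  obtain ⟨p₀, hp₀⟩ := id hS
  set G : (ℝ × ℝ) × (ℝ × ℝ) × (ℝ × ℝ) → ℝ := fun y => S.sup' hS fun p => dfree y.1 y.2.1 v p y.2.2
  have hG : ∀ y, dist y.2.2 p₀ ≤ v * G y := fun y => by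
    rw [dist_comm, ← div_le_iff₀' (by linarith)]
    exact (dist_div_le_dfree p₀ _ hv.le).trans (S.le_sup' (fun p => dfree y.1 y.2.1 v p y.2.2) hp₀)
  -- `(f, u, s)` encodes the freeway of direction `u` on which `f` sits at parameter `s`
  let φ (x : (ℝ × ℝ) × (ℝ × ℝ) × ℝ) : (ℝ × ℝ) × (ℝ × ℝ) × (ℝ × ℝ) :=
    (x.1 - x.2.2 • x.2.1, x.1 + (1 - x.2.2) • x.2.1, x.1)
  have hGφ : Continuous (G ∘ φ) :=
    (Continuous.finset_sup'_apply hS fun p _ => continuous_dfree v p).comp (by fun_prop)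
  set x₀ : (ℝ × ℝ) × (ℝ × ℝ) × ℝ := (p₀, (ℓ, 0), 0)
  set K := Metric.closedBall p₀ (v * G (φ x₀)) ×ˢ {u | n2 u = ℓ} ×ˢ Icc (0 : ℝ) 1
  have hx₀ : x₀ ∈ K := ⟨hG (φ x₀), by simp [n2, x₀, hℓ.le], by simp [x₀]⟩
  obtain ⟨x, ⟨-, hx, hxs⟩, hmin⟩ := ((isCompact_closedBall _ _).prod
    ((isCompact_setOf_n2_eq ℓ).prod isCompact_Icc)).exists_isMinOn ⟨x₀, hx₀⟩ hGφ.continuousOn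
  refine ⟨_, _, x.1, ?_, mem_segment_sub_smul_add_smul x.1 x.2.1 hxs, fun a' b' f' hab' => ?_⟩
  · rw [n2_sub_comm, ← hx]
    congr 1
    module
  rcases le_total (G (φ x₀)) (G (a', b', f')) with hle | hlt
  · exact (hmin hx₀).trans hle
  obtain ⟨s, hs, hdom⟩ := exists_dfree_shift_le a' b' f' (by linarith : (0 : ℝ) ≤ v)
  have hφG : G (φ (f', b' - a', s)) ≤ G (a', b', f') := Finset.sup'_mono_fun fun p _ => hdom p
  refine (hmin ⟨?_, ?_, hs⟩).trans hφG
  · exact (hG _).trans (mul_le_mul_of_nonneg_left (hφG.trans hlt) (by linarith))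
  · exact (n2_sub_comm _ _).trans hab'
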